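/- The spectral bound of L⁰, the uniform growth bound of the semigroup e^{L⁰t}, and the essential growth bound of e^{L⁰t} all vanish: s(L⁰) = γ(e^{L⁰t}) = γ̃_ess(e^{L⁰t}) = 0; in particular the essential spectral radius satisfies r̃_ess(e^{L⁰t}) = 1 for every t > 0. -/

import Mathlib

noncomputable section

namespace NSRot

open scoped Topology
open MeasureTheory

variable {H : Type*} [NormedAddCommGroup H] [InnerProductSpace ℂ H] [CompleteSpace H]

/-- The action of `L - λ` as a linear map on the domain of the (generally unbounded,
densely defined) operator `L`. -/
def shifted (L : H →ₗ.[ℂ] H) (lam : ℂ) : L.domain →ₗ[ℂ] H :=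
  L.toFun - lam • L.domain.subtype

/-- The resolvent set of an unbounded operator: those `λ` for which `L - λ` has a bounded
everywhere-defined inverse. -/
def resolventSet (L : H →ₗ.[ℂ] H) : Set ℂ :=
  {lam | ∃ R : H →L[ℂ] H, (∀ y : H, R y ∈ L.domain) ∧
    (∀ (y : H) (hy : R y ∈ L.domain), L ⟨R y, hy⟩ - lam • R y = y) ∧
    (∀ x : L.domain, R (L x - lam • (x : H)) = x)}

/-- The spectrum of an unbounded operator. -/
def pSpec (L : H →ₗ.[ℂ] H) : Set ℂ := (resolventSet L)ᶜ

/-- `lam` is an eigenvalue of the unbounded operator `L`. -/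
def IsEigenvalue (L : H →ₗ.[ℂ] H) (lam : ℂ) : Prop :=
  ∃ x : L.domain, (x : H) ≠ 0 ∧ L x = lam • (x : H)

/-- The generalized eigenspaces (kernels of the powers of `L - λ`). -/
def genEigSpace (L : H →ₗ.[ℂ] H) (lam : ℂ) : ℕ → Set H
  | 0 => {0}
  | (n + 1) => {x | ∃ hx : x ∈ L.domain, L ⟨x, hx⟩ - lam • x ∈ genEigSpace L lam n}

/-- `lam` has finite algebraic multiplicity as an eigenvalue of `L`: all generalized
eigenspaces are contained in a single finite-dimensional subspace. -/
def FiniteAlgMult (L : H →ₗ.[ℂ] H) (lam : ℂ) : Prop :=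
  ∃ V : Submodule ℂ H, FiniteDimensional ℂ V ∧ ∀ n, genEigSpace L lam n ⊆ (V : Set H)

/-- The spectral bound `s(L) = sup {Re λ : λ ∈ Sp(L)}`. -/
def spectralBound (L : H →ₗ.[ℂ] H) : ℝ := sSup (Complex.re '' pSpec L)

/-- `T` is a `C₀`-semigroup of bounded operators. -/
def IsC0Semigroup (T : ℝ → H →L[ℂ] H) : Prop :=
  T 0 = 1 ∧ (∀ s t : ℝ, 0 ≤ s → 0 ≤ t → T (s + t) = (T s).comp (T t)) ∧
    ∀ y : H, ContinuousOn (fun t => T t y) (Set.Ici 0)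

/-- The unbounded operator `L` is the infinitesimal generator of the semigroup `T`. -/
def IsGenerator (T : ℝ → H →L[ℂ] H) (L : H →ₗ.[ℂ] H) : Prop :=
  (∀ y : H, y ∈ L.domain ↔ ∃ d : H, HasDerivWithinAt (fun t => T t y) d (Set.Ici 0) 0) ∧
    ∀ x : L.domain, HasDerivWithinAt (fun t => T t (x : H)) (L x) (Set.Ici 0) 0

/-- The uniform growth bound
`γ(T) = inf {μ : ∃ M > 0, ∀ t > 0, ∀ x, ‖T(t)x‖ ≤ M e^{μt} ‖x‖}`. -/
def growthBound (T : ℝ → H →L[ℂ] H) : ℝ :=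
  sInf {μ : ℝ | ∃ M : ℝ, 0 < M ∧ ∀ t : ℝ, 0 < t → ∀ x : H, ‖T t x‖ ≤ M * Real.exp (μ * t) * ‖x‖}

/-- `L - λ` is semi-Fredholm: closed range and finite nullity or finite deficiency. -/
def SemiFredholmAt (L : H →ₗ.[ℂ] H) (lam : ℂ) : Prop :=
  IsClosed ((LinearMap.range (shifted L lam) : Submodule ℂ H) : Set H) ∧
    (FiniteDimensional ℂ (LinearMap.ker (shifted L lam)) ∨
      FiniteDimensional ℂ (H ⧸ LinearMap.range (shifted L lam)))

/-- `L - λ` is Fredholm: closed range and finite nullity and finite deficiency. -/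
def FredholmAt (L : H →ₗ.[ℂ] H) (lam : ℂ) : Prop :=
  IsClosed ((LinearMap.range (shifted L lam) : Submodule ℂ H) : Set H) ∧
    FiniteDimensional ℂ (LinearMap.ker (shifted L lam)) ∧
    FiniteDimensional ℂ (H ⧸ LinearMap.range (shifted L lam))

/-- The essential spectrum (à la Kato): the set of `λ` where `L - λ` is not semi-Fredholm. -/
def essSpec (L : H →ₗ.[ℂ] H) : Set ℂ := {lam | ¬ SemiFredholmAt L lam}

/-- The essential spectrum defined via failure of Fredholmness. -/
def essSpecEN (L : H →ₗ.[ℂ] H) : Set ℂ := {lam | ¬ FredholmAt L lam}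

/-- The essential spectrum of a bounded operator, defined via failure of Fredholmness. -/
def essSpecB (T : H →L[ℂ] H) : Set ℂ :=
  {lam | ¬ (IsClosed ((LinearMap.range ((T - lam • (1 : H →L[ℂ] H)) : H →ₗ[ℂ] H) : Submodule ℂ H) : Set H) ∧
    FiniteDimensional ℂ (LinearMap.ker ((T - lam • (1 : H →L[ℂ] H)) : H →ₗ[ℂ] H)) ∧
    FiniteDimensional ℂ (H ⧸ LinearMap.range ((T - lam • (1 : H →L[ℂ] H)) : H →ₗ[ℂ] H)))}

/-- The essential spectral radius of a bounded operator. -/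
def essRadius (T : H →L[ℂ] H) : ℝ := sSup ((fun z : ℂ => ‖z‖) '' essSpecB T)

/-
A `C₀`-semigroup and its generator are tied together by the truncated Laplace transform
`V_λ(t) = ∫₀ᵗ e^{-λs} T(s) ds`: on `H` one has `(L - λ) V_λ(t) = e^{-λt} T(t) - 1`, and on the
domain `V_λ(t) (L - λ) = e^{-λt} T(t) - 1`. Hence if `T(t) - e^{λt}` is Fredholm then `L - λ` is
semi-Fredholm, i.e. `e^{t·ess Sp(L)} ⊆ ess Sp(T(t))`; and a decay bound `‖T(t)‖ ≤ M e^{μt}` makes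
`L - λ` bounded below for `Re λ > μ`, hence semi-Fredholm because a generator is closed.
As `0` lies in the closure of `ess Sp(L⁰)`, no decay rate `μ < 0` is possible, and the essential
spectral radius of `T(t)` is at least `e⁰ = 1`. Boundedness of the semigroup gives the matching
upper bounds `s(L⁰) ≤ 0`, `γ ≤ 0` and, through the spectral radius of `T(t)`, `r̃_ess ≤ 1`.
-/

open Set Filter

lemma hasDerivAt_cexp_mul_ofReal (c : ℂ) (s : ℝ) :
    HasDerivAt (fun u : ℝ => Complex.exp (c * u)) (c * Complex.exp (c * s)) s := by
  simpa [mul_comm] using (((hasDerivAt_id s).ofReal_comp).const_mul c).cexp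

lemma csSup_eq_of_mem_closure {s : Set ℝ} {a : ℝ} (hle : ∀ x ∈ s, x ≤ a) (ha : a ∈ closure s) :
    sSup s = a :=
  (isLUB_of_mem_closure hle ha).csSup_eq (closure_nonempty_iff.1 ⟨a, ha⟩)

lemma spectrum_subset_closedBall_one_of_norm_pow_le {𝕜 A : Type*} [NontriviallyNormedField 𝕜]
    [NormedRing A] [NormedAlgebra 𝕜 A] [CompleteSpace A] {a : A} {C : ℝ}
    (h : ∀ᶠ n in atTop, ‖a ^ n‖ ≤ C) : spectrum 𝕜 a ⊆ Metric.closedBall 0 1 := by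
  intro k hk
  rw [mem_closedBall_zero_iff]
  by_contra! hk1
  obtain ⟨n, hn, hlt⟩ := (h.and ((tendsto_pow_atTop_atTop_of_one_lt hk1).eventually_gt_atTop
    (C * ‖(1 : A)‖))).exists
  have := spectrum.norm_le_norm_mul_of_mem (spectrum.pow_mem_pow a n hk)
  rw [norm_pow] at this
  nlinarith [norm_nonneg (1 : A)]

lemma hasDerivWithinAt_Ici_iff_comp_const_add {E : Type*} [NormedAddCommGroup E] [NormedSpace ℝ E]
    {f : ℝ → E} {f' : E} {a : ℝ} :
    HasDerivWithinAt f f' (Ici a) a ↔ HasDerivWithinAt (fun h => f (a + h)) f' (Ici 0) 0 := by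
  constructor
  · intro hf
    simpa [Function.comp_def] using hf.scomp_of_eq 0
      ((hasDerivAt_id 0).const_add a).hasDerivWithinAt
      (fun h hh => by simp only [mem_Ici, id_eq] at *; linarith) (add_zero a).symm
  · intro hf
    simpa [Function.comp_def] using hf.scomp_of_eq a
      ((hasDerivAt_id a).sub_const a).hasDerivWithinAt
      (fun h hh => by simp only [mem_Ici, id_eq] at *; linarith) (sub_self a).symm

lemma hasDerivWithinAt_integral_Ici {E : Type*} [NormedAddCommGroup E] [NormedSpace ℝ E]
    [CompleteSpace E] {g : ℝ → E} (hg : ContinuousOn g (Ici 0)) {s : ℝ} (hs : 0 ≤ s) :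
    HasDerivWithinAt (fun u => ∫ r in (0:ℝ)..u, g r) (g s) (Ici s) s := by
  have hIoi : Ioi s ⊆ Ici 0 := fun r hr => hs.trans (le_of_lt hr)
  refine intervalIntegral.integral_hasDerivWithinAt_right (t := Ioi s)
    ((hg.mono fun r hr => ?_).intervalIntegrable) ?_ ((hg s hs).mono hIoi)
  · exact le_trans (le_min le_rfl hs) hr.1
  · exact ⟨Ici 0, mem_of_superset self_mem_nhdsWithin hIoi,
      hg.aestronglyMeasurable measurableSet_Ici⟩

variable {T : ℝ → H →L[ℂ] H} {L : H →ₗ.[ℂ] H}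

omit [CompleteSpace H] in
@[simp]
lemma shifted_apply (L : H →ₗ.[ℂ] H) (lam : ℂ) (v : L.domain) :
    shifted L lam v = L v - lam • (v : H) := rfl

def truncLaplace (T : ℝ → H →L[ℂ] H) (lam : ℂ) (t : ℝ) (y : H) : H :=
  ∫ s in (0:ℝ)..t, Complex.exp (-lam * s) • T s y

namespace IsC0Semigroup

omit [CompleteSpace H] in
lemma pow_eq (hT : IsC0Semigroup T) {t : ℝ} (ht : 0 ≤ t) (n : ℕ) : T t ^ n = T (n * t) := by
  induction n with
  | zero => simp [hT.1]
  | succ n ih =>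
    rw [pow_succ, ih, Nat.cast_succ, add_one_mul, hT.2.1 _ t (by positivity) ht]
    rfl

omit [CompleteSpace H] in
lemma continuousOn_smul (hT : IsC0Semigroup T) {f : ℝ → ℂ} (hf : Continuous f) (y : H) :
    ContinuousOn (fun s => f s • T s y) (Ici 0) :=
  hf.continuousOn.smul (hT.2.2 y)

omit [CompleteSpace H] in
lemma intervalIntegrable_smul (hT : IsC0Semigroup T) {f : ℝ → ℂ} (hf : Continuous f) (y : H)
    {a b : ℝ} (ha : 0 ≤ a) (hb : 0 ≤ b) :
    IntervalIntegrable (fun s => f s • T s y) volume a b :=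
  ((hT.continuousOn_smul hf y).mono fun _ hu => le_trans (le_min ha hb) hu.1).intervalIntegrable

lemma exists_norm_smul_le (hT : IsC0Semigroup T) {f : ℝ → ℂ} (hf : Continuous f)
    (t : ℝ) : ∃ K, ∀ s ∈ Icc 0 t, ‖f s • T s‖ ≤ K := by
  obtain ⟨K, hK⟩ := banach_steinhaus (g := fun s : Icc 0 t => f s • T s) fun y =>
    (isCompact_Icc.exists_bound_of_continuousOn
      ((hT.continuousOn_smul hf y).mono Icc_subset_Ici_self)).imp fun C hC s => hC s s.2
  exact ⟨K, fun s hs => hK ⟨s, hs⟩⟩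

lemma apply_truncLaplace (hT : IsC0Semigroup T) (lam : ℂ) (y : H) {t h : ℝ}
    (ht : 0 ≤ t) (hh : 0 ≤ h) :
    T h (truncLaplace T lam t y) =
      Complex.exp (lam * h) • ∫ s in h..t + h, Complex.exp (-lam * s) • T s y := by
  have hc : Continuous fun s : ℝ => Complex.exp (-lam * s) := by fun_prop
  have hshift := intervalIntegral.integral_comp_add_right
    (fun s : ℝ => Complex.exp (lam * h) • Complex.exp (-lam * s) • T s y) (a := 0) (b := t) h
  rw [zero_add] at hshift
  rw [truncLaplace, ← (T h).intervalIntegral_comp_comm (hT.intervalIntegrable_smul hc y le_rfl ht),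
    ← intervalIntegral.integral_smul, ← hshift]
  refine intervalIntegral.integral_congr fun s hs => ?_
  have hs0 : 0 ≤ s := by rw [uIcc_of_le ht] at hs; exact hs.1
  simp only [map_smul, smul_smul, ← Complex.exp_add, add_comm s h, hT.2.1 h s hh hs0]
  congr 2
  push_cast
  ring

lemma continuous_truncLaplace (hT : IsC0Semigroup T) (lam : ℂ) {t : ℝ}
    (ht : 0 ≤ t) : Continuous (truncLaplace T lam t) := by
  have hc : Continuous fun s : ℝ => Complex.exp (-lam * s) := by fun_prop
  obtain ⟨K, hK⟩ := hT.exists_norm_smul_le hc t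
  have hint := fun y => hT.intervalIntegrable_smul hc y le_rfl ht
  let V : H →ₗ[ℂ] H :=
    { toFun := truncLaplace T lam t
      map_add' := fun y y' => by
        simp only [truncLaplace, map_add, smul_add]
        exact intervalIntegral.integral_add (hint y) (hint y')
      map_smul' := fun c y => by
        simp only [truncLaplace, map_smul, smul_comm _ c]
        exact intervalIntegral.integral_smul c _ }
  refine AddMonoidHomClass.continuous_of_bound V (K * t) fun y => ?_
  have hbound : ∀ s ∈ uIoc 0 t, ‖Complex.exp (-lam * s) • T s y‖ ≤ K * ‖y‖ := fun s hs =>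
    ((Complex.exp (-lam * s) • T s).le_opNorm y).trans <| mul_le_mul_of_nonneg_right
      (hK s (Ioc_subset_Icc_self (by simpa [ht] using hs))) (norm_nonneg y)
  simpa [V, truncLaplace, abs_of_nonneg ht, mul_right_comm] using
    intervalIntegral.norm_integral_le_of_norm_le_const hbound

end IsC0Semigroup

namespace IsGenerator

omit [CompleteSpace H] in
lemma exists_mem_domain_of_hasDerivWithinAt (hgen : IsGenerator T L) {y d : H}
    (h : HasDerivWithinAt (fun t => T t y) d (Ici 0) 0) :
    ∃ hy : y ∈ L.domain, L ⟨y, hy⟩ = d :=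
  have hy := (hgen.1 y).2 ⟨d, h⟩
  ⟨hy, (uniqueDiffOn_Ici 0 0 self_mem_Ici).eq_deriv _ (hgen.2 ⟨y, hy⟩) h⟩

omit [CompleteSpace H] in
lemma hasDerivWithinAt_apply (hT : IsC0Semigroup T) (hgen : IsGenerator T L) (x : L.domain)
    {s : ℝ} (hs : 0 ≤ s) :
    HasDerivWithinAt (fun u => T u x) (T s (L x)) (Ici s) s := by
  rw [hasDerivWithinAt_Ici_iff_comp_const_add]
  have := ((T s).restrictScalars ℝ).hasFDerivAt.comp_hasDerivWithinAt 0 (hgen.2 x)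
  refine this.congr (fun h hh => ?_) ?_
  · simp [hT.2.1 s h hs hh]
  · simp [hT.1]

lemma truncLaplace_shifted (hT : IsC0Semigroup T) (hgen : IsGenerator T L)
    (lam : ℂ) (x : L.domain) {t : ℝ} (ht : 0 ≤ t) :
    truncLaplace T lam t (shifted L lam x) = Complex.exp (-lam * t) • T t x - x := by
  have hc : Continuous fun s : ℝ => Complex.exp (-lam * s) := by fun_prop
  have hderiv : ∀ s ∈ Ioo (min 0 t) (max 0 t), HasDerivWithinAt
      (fun s : ℝ => Complex.exp (-lam * s) • T s x)
      (Complex.exp (-lam * s) • T s (shifted L lam x)) (Ioi s) s := by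
    intro s hs
    have hs0 : 0 < s := by simpa [ht] using hs.1
    refine (((hasDerivAt_cexp_mul_ofReal (-lam) s).hasDerivWithinAt.smul
      (hgen.hasDerivWithinAt_apply hT x hs0.le)).mono Ioi_subset_Ici_self).congr_deriv ?_
    rw [shifted_apply, map_sub, map_smul]
    module
  have hcont : ContinuousOn (fun s : ℝ => Complex.exp (-lam * s) • T s x) (uIcc 0 t) :=
    (hT.continuousOn_smul hc x).mono (by rw [uIcc_of_le ht]; exact Icc_subset_Ici_self)
  rw [truncLaplace]
  simpa [hT.1] using intervalIntegral.integral_eq_sub_of_hasDeriv_right hcont hderiv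
    (hT.intervalIntegrable_smul hc _ le_rfl ht)

lemma shifted_truncLaplace (hT : IsC0Semigroup T) (hgen : IsGenerator T L)
    (lam : ℂ) (y : H) {t : ℝ} (ht : 0 ≤ t) :
    ∃ hV : truncLaplace T lam t y ∈ L.domain,
      shifted L lam ⟨_, hV⟩ = Complex.exp (-lam * t) • T t y - y := by
  set g : ℝ → H := fun s => Complex.exp (-lam * s) • T s y
  have hg : ContinuousOn g (Ici 0) := hT.continuousOn_smul (by fun_prop) y
  have hG : ∀ s, 0 ≤ s → HasDerivWithinAt (fun u => ∫ r in (0:ℝ)..u, g r) (g s) (Ici s) s :=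
    fun s hs => hasDerivWithinAt_integral_Ici hg hs
  have hint : ∀ s, 0 ≤ s → IntervalIntegrable g volume 0 s :=
    fun s hs => hT.intervalIntegrable_smul (by fun_prop) y le_rfl hs
  -- `T(h) V = e^{λh} (G(t+h) - G(h))` with `G` a primitive of `g`, differentiated at `h = 0`
  have hderiv : HasDerivWithinAt (fun h => T h (truncLaplace T lam t y))
      (g t - g 0 + lam • truncLaplace T lam t y) (Ici 0) 0 := by
    have hdiff := (hasDerivWithinAt_Ici_iff_comp_const_add.1 (hG t ht)).sub (hG 0 le_rfl)
    refine (((hasDerivAt_cexp_mul_ofReal lam 0).hasDerivWithinAt.smul hdiff).congr_of_mem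
      (fun h hh => ?_) self_mem_Ici).congr_deriv ?_
    · show _ = Complex.exp (lam * h) • ((∫ r in (0:ℝ)..t + h, g r) - ∫ r in (0:ℝ)..h, g r)
      rw [hT.apply_truncLaplace lam y ht hh, intervalIntegral.integral_interval_sub_left
        (hint _ (add_nonneg ht hh)) (hint h hh)]
    · simp [truncLaplace, g]
  obtain ⟨hV, hLV⟩ := hgen.exists_mem_domain_of_hasDerivWithinAt hderiv
  exact ⟨hV, by simp [hLV, g, hT.1]⟩

lemma isClosed (hT : IsC0Semigroup T) (hgen : IsGenerator T L) : L.IsClosed := by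
  refine isSeqClosed_iff_isClosed.1 fun p q hp hpq => ?_
  choose v hv using fun n => L.mem_graph_iff.1 (hp n)
  have hx : Tendsto (fun n => (v n : H)) atTop (𝓝 q.1) := by
    simpa [Function.comp_def, (hv _).1] using (continuous_fst.tendsto q).comp hpq
  have hz : Tendsto (fun n => L (v n)) atTop (𝓝 q.2) := by
    simpa [Function.comp_def, (hv _).2] using (continuous_snd.tendsto q).comp hpq
  -- `T(t) x - x = ∫₀ᵗ T(s) (L x) ds` on the domain passes to the limit
  have hid : ∀ t, 0 ≤ t → T t q.1 = q.1 + truncLaplace T 0 t q.2 := by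
    intro t ht
    have hlim : Tendsto (fun n => T t (v n) - v n) atTop (𝓝 (truncLaplace T 0 t q.2)) := by
      refine (((hT.continuous_truncLaplace 0 ht).tendsto _).comp hz).congr fun n => ?_
      simpa using hgen.truncLaplace_shifted hT 0 (v n) ht
    exact eq_add_of_sub_eq' (tendsto_nhds_unique
      ((((T t).continuous.tendsto _).comp hx).sub hx) hlim)
  have hderiv : HasDerivWithinAt (fun t => T t q.1) q.2 (Ici 0) 0 := by
    have := (hasDerivWithinAt_integral_Ici (hT.2.2 q.2) le_rfl).const_add q.1
    refine (this.congr_of_mem (fun t ht => ?_) self_mem_Ici).congr_deriv ?_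
    · simp [hid t ht, truncLaplace]
    · simp [hT.1]
  obtain ⟨hq, hLq⟩ := hgen.exists_mem_domain_of_hasDerivWithinAt hderiv
  exact L.mem_graph_iff.2 ⟨⟨q.1, hq⟩, rfl, hLq⟩

lemma exp_mem_essSpecB (hT : IsC0Semigroup T) (hgen : IsGenerator T L) {t : ℝ}
    (ht : 0 ≤ t) {lam : ℂ} (hlam : lam ∈ essSpec L) :
    Complex.exp (lam * t) ∈ essSpecB (T t) := by
  rintro ⟨hcl, hker, hcoker⟩
  set S : H →L[ℂ] H := T t - Complex.exp (lam * t) • 1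
  have hrange : LinearMap.range (S : H →ₗ[ℂ] H) ≤ LinearMap.range (shifted L lam) := by
    rintro _ ⟨y, rfl⟩
    obtain ⟨hV, hLV⟩ := hgen.shifted_truncLaplace hT lam y ht
    refine ⟨Complex.exp (lam * t) • ⟨_, hV⟩, ?_⟩
    rw [map_smul, hLV, smul_sub, smul_smul, ← Complex.exp_add]
    simp [S]
  have hkerS : ∀ v ∈ LinearMap.ker (shifted L lam), (v : H) ∈ LinearMap.ker (S : H →ₗ[ℂ] H) := by
    intro v hv
    have := hgen.truncLaplace_shifted hT lam v ht
    rw [LinearMap.mem_ker.1 hv, show truncLaplace T lam t 0 = 0 by simp [truncLaplace],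
      eq_comm, sub_eq_zero] at this
    have hTv : T t v = Complex.exp (lam * t) • (v : H) := by
      conv_rhs => rw [← this]
      rw [smul_smul, ← Complex.exp_add]
      simp
    simp [S, hTv]
  let φ : LinearMap.ker (shifted L lam) →ₗ[ℂ] LinearMap.ker (S : H →ₗ[ℂ] H) :=
    LinearMap.codRestrict _ (L.domain.subtype ∘ₗ (LinearMap.ker (shifted L lam)).subtype)
      fun v => hkerS v v.2
  have hφ : Function.Injective φ := fun a b hab =>
    Subtype.ext <| Subtype.ext (Subtype.ext_iff.1 hab :)
  exact hlam ⟨Submodule.isClosed_mono_of_finiteDimensional_quotient hcl hrange,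
    Or.inl (FiniteDimensional.of_injective φ hφ)⟩

lemma one_mem_closure_norm_essSpecB (hT : IsC0Semigroup T) (hgen : IsGenerator T L) {t : ℝ}
    (ht : 0 ≤ t) (h0 : (0 : ℂ) ∈ closure (essSpec L)) :
    (1 : ℝ) ∈ closure ((fun z : ℂ => ‖z‖) '' essSpecB (T t)) := by
  -- `z ↦ ‖e^{zt}‖` maps `essSpec L` into `‖essSpecB (T t)‖` and `0` to `1`
  have := mem_closure_image (f := fun z : ℂ => ‖Complex.exp (z * t)‖) (by fun_prop) h0
  refine closure_mono ?_ (by simpa using this)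
  rintro _ ⟨z, hz, rfl⟩
  exact ⟨_, hgen.exp_mem_essSpecB hT ht hz, rfl⟩

end IsGenerator

omit [CompleteSpace H] in
lemma semiFredholmAt_of_mem_resolventSet {lam : ℂ} (h : lam ∈ resolventSet L) :
    SemiFredholmAt L lam := by
  obtain ⟨R, hdom, hright, hleft⟩ := h
  have hrange : LinearMap.range (shifted L lam) = ⊤ :=
    LinearMap.range_eq_top.2 fun y => ⟨⟨R y, hdom y⟩, hright y (hdom y)⟩
  have hker : LinearMap.ker (shifted L lam) = ⊥ := LinearMap.ker_eq_bot'.2 fun v hv => by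
    have := hleft v
    rw [← shifted_apply, hv, map_zero] at this
    exact Subtype.ext this.symm
  refine ⟨by simp [hrange], Or.inl ?_⟩
  rw [hker]
  infer_instance

omit [CompleteSpace H] in
lemma essSpec_subset_pSpec : essSpec L ⊆ pSpec L :=
  fun _ hlam hres => hlam (semiFredholmAt_of_mem_resolventSet hres)

lemma isClosed_range_shifted_of_norm_le (hL : L.IsClosed) (lam : ℂ) {C : ℝ}
    (hC : ∀ v : L.domain, ‖(v : H)‖ ≤ C * ‖shifted L lam v‖) :
    IsClosed (LinearMap.range (shifted L lam) : Set H) := by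
  refine isSeqClosed_iff_isClosed.1 fun y y₀ hy hlim => ?_
  choose v hv using fun n => LinearMap.mem_range.1 (hy n)
  have hcauchy : CauchySeq fun n => (v n : H) := by
    have hy' := cauchySeq_iff_tendsto_dist_atTop_0.1 hlim.cauchySeq
    refine cauchySeq_iff_tendsto_dist_atTop_0.2 <|
      squeeze_zero (fun _ => dist_nonneg) (fun n => ?_) (by simpa using hy'.const_mul C)
    have := hC (v n.1 - v n.2)
    rw [map_sub, hv, hv] at this
    simpa [dist_eq_norm] using this
  obtain ⟨x, hx⟩ := cauchySeq_tendsto_of_complete hcauchy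
  have hLx : Tendsto (fun n => L (v n)) atTop (𝓝 (y₀ + lam • x)) :=
    (hlim.add (hx.const_smul lam)).congr fun n => by simp [← hv n]
  obtain ⟨u, hu, hLu⟩ := L.mem_graph_iff.1 <|
    hL.mem_of_tendsto (hx.prodMk_nhds hLx) (Eventually.of_forall fun n => L.mem_graph (v n))
  exact ⟨u, by simp [hu, hLu]⟩

lemma essSpecB_subset_spectrum (S : H →L[ℂ] H) : essSpecB S ⊆ spectrum ℂ S := by
  intro lam hlam hres
  have hbij : Function.Bijective (S - lam • (1 : H →L[ℂ] H)) := by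
    rw [← ContinuousLinearMap.isUnit_iff_bijective, ← neg_sub, IsUnit.neg_iff,
      ← Algebra.algebraMap_eq_smul_one]
    exact spectrum.mem_resolventSet_iff.1 hres
  have hrange : LinearMap.range ((S - lam • (1 : H →L[ℂ] H)) : H →ₗ[ℂ] H) = ⊤ :=
    LinearMap.range_eq_top.2 hbij.2
  have hker : LinearMap.ker ((S - lam • (1 : H →L[ℂ] H)) : H →ₗ[ℂ] H) = ⊥ :=
    LinearMap.ker_eq_bot.2 hbij.1
  exact hlam ⟨by rw [hrange]; exact isClosed_univ, by rw [hker]; infer_instance,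
    by rw [hrange]; infer_instance⟩

section Decay

variable {M μ : ℝ} (hdecay : ∀ t : ℝ, 0 < t → ∀ y : H, ‖T t y‖ ≤ M * Real.exp (μ * t) * ‖y‖)
include hdecay

omit [CompleteSpace H] in
lemma norm_cexp_smul_le_of_decay (lam : ℂ) {s : ℝ} (hs : 0 < s) (y : H) :
    ‖Complex.exp (-lam * s) • T s y‖ ≤ M * Real.exp ((μ - lam.re) * s) * ‖y‖ := by
  rw [norm_smul, Complex.norm_exp]
  calc Real.exp (-lam * s).re * ‖T s y‖
      ≤ Real.exp (-lam.re * s) * (M * Real.exp (μ * s) * ‖y‖) :=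
        mul_le_mul (by simp) (hdecay s hs y) (norm_nonneg _) (Real.exp_pos _).le
    _ = M * Real.exp ((μ - lam.re) * s) * ‖y‖ := by
        rw [sub_mul, sub_eq_add_neg, Real.exp_add, ← neg_mul]
        ring

lemma IsGenerator.norm_le_norm_shifted_of_decay (hT : IsC0Semigroup T) (hgen : IsGenerator T L)
    (hM : 0 ≤ M) {lam : ℂ} (hlam : μ < lam.re) :
    ∃ C, ∀ v : L.domain, ‖(v : H)‖ ≤ C * ‖shifted L lam v‖ := by
  obtain ⟨t, hsmall, ht⟩ : ∃ t, M * Real.exp ((μ - lam.re) * t) ≤ 1 / 2 ∧ 0 < t := by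
    have : Tendsto (fun t => M * Real.exp ((μ - lam.re) * t)) atTop (𝓝 0) := by
      simpa using (Real.tendsto_exp_atBot.comp
        (tendsto_id.const_mul_atTop_of_neg (sub_neg.2 hlam))).const_mul M
    exact ((this.eventually (ge_mem_nhds (by norm_num))).and (eventually_gt_atTop 0)).exists
  refine ⟨2 * M * t, fun v => ?_⟩
  set w := shifted L lam v
  have hV : ‖truncLaplace T lam t w‖ ≤ M * ‖w‖ * t := by
    have hbound : ∀ s ∈ uIoc 0 t, ‖Complex.exp (-lam * s) • T s w‖ ≤ M * ‖w‖ := by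
      intro s hs
      have hs0 : 0 < s := by simpa [ht.le] using hs.1
      have : Real.exp ((μ - lam.re) * s) ≤ 1 :=
        Real.exp_le_one_iff.2 (mul_nonpos_of_nonpos_of_nonneg (by linarith) hs0.le)
      calc _ ≤ M * Real.exp ((μ - lam.re) * s) * ‖w‖ := norm_cexp_smul_le_of_decay hdecay lam hs0 w
        _ ≤ M * 1 * ‖w‖ := by gcongr
        _ = M * ‖w‖ := by ring
    simpa [truncLaplace, abs_of_pos ht] using
      intervalIntegral.norm_integral_le_of_norm_le_const hbound
  -- `v = e^{-λt} T(t) v - V w`, whose first term is at most `‖v‖ / 2`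
  have hv : (v : H) = Complex.exp (-lam * t) • T t v - truncLaplace T lam t w := by
    rw [hgen.truncLaplace_shifted hT lam v ht.le, sub_sub_cancel]
  have h1 := norm_cexp_smul_le_of_decay hdecay lam ht v
  have h2 : ‖(v : H)‖ ≤ _ := hv ▸ norm_sub_le _ _
  nlinarith [norm_nonneg (v : H), norm_nonneg w]

lemma IsGenerator.essSpec_subset_re_le_of_decay (hT : IsC0Semigroup T) (hgen : IsGenerator T L)
    (hM : 0 ≤ M) : essSpec L ⊆ {z | z.re ≤ μ} := by
  intro lam hlam
  refine not_lt.1 fun (hre : μ < lam.re) => hlam ?_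
  obtain ⟨C, hC⟩ := hgen.norm_le_norm_shifted_of_decay hdecay hT hM hre
  have hker : LinearMap.ker (shifted L lam) = ⊥ :=
    LinearMap.ker_eq_bot'.2 fun v hv => by
      have := hC v
      rw [hv, norm_zero, mul_zero, norm_le_zero_iff] at this
      exact Subtype.ext this
  refine ⟨isClosed_range_shifted_of_norm_le (hgen.isClosed hT) lam hC, Or.inl ?_⟩
  rw [hker]
  infer_instance

end Decay

theorem L0_growth_bounds_vanish_general
    (L0 : H →ₗ.[ℂ] H)
    (T0 : ℝ → H →L[ℂ] H) (hT0 : IsC0Semigroup T0) (hgen0 : IsGenerator T0 L0)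
    -- the uniform bound `‖e^{L⁰t}φ‖₂ ≤ c‖φ‖₂`
    (hbdd : ∃ c : ℝ, 0 < c ∧ ∀ t : ℝ, 0 < t → ∀ y : H, ‖T0 t y‖ ≤ c * ‖y‖)
    -- `Sp(L⁰) ⊆ {Re λ ≤ 0}`, with `0` in the closure of the essential spectrum
    (hspec : pSpec L0 ⊆ {z : ℂ | z.re ≤ 0})
    (h0cl : (0 : ℂ) ∈ closure (essSpec L0)) :
    spectralBound L0 = 0 ∧ growthBound T0 = 0 ∧
    ∀ t : ℝ, 0 < t →
      essRadius (T0 t) = 1 ∧ Real.log (essRadius (T0 t)) / t = 0 := by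
  obtain ⟨c, hc, hbddc⟩ := hbdd
  have hrad : ∀ t : ℝ, 0 < t → essRadius (T0 t) = 1 := by
    intro t ht
    have hpow : ∀ᶠ n in atTop, ‖T0 t ^ n‖ ≤ c := (eventually_ge_atTop 1).mono fun n hn => by
      rw [hT0.pow_eq ht.le]
      exact ContinuousLinearMap.opNorm_le_bound _ hc.le (hbddc _ (by positivity))
    refine csSup_eq_of_mem_closure ?_ (hgen0.one_mem_closure_norm_essSpecB hT0 ht.le h0cl)
    rintro _ ⟨z, hz, rfl⟩
    simpa using spectrum_subset_closedBall_one_of_norm_pow_le hpow (essSpecB_subset_spectrum _ hz)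
  refine ⟨?_, ?_, fun t ht => ⟨hrad t ht, by simp [hrad t ht]⟩⟩
  · refine csSup_eq_of_mem_closure (by rintro _ ⟨z, hz, rfl⟩; exact hspec hz) ?_
    simpa using mem_closure_image Complex.continuous_re.continuousAt
      (closure_mono essSpec_subset_pSpec h0cl)
  · refine IsLeast.csInf_eq ⟨⟨c, hc, by simpa using hbddc⟩, fun μ ⟨M, hM, hdecay⟩ => ?_⟩
    simpa using closure_minimal (hgen0.essSpec_subset_re_le_of_decay hdecay hT0 hM.le)
      (isClosed_le Complex.continuous_re continuous_const) h0cl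

/-- For the semigroup `e^{L⁰t}` generated by `L⁰ = νA + ωB⁰ + u∞B¹`:
the spectral bound of `L⁰`, the uniform growth bound of `e^{L⁰t}` and the essential growth
bound of `e^{L⁰t}` all vanish, `s(L⁰) = γ(e^{L⁰t}) = γ̃_ess(e^{L⁰t}) = 0`; in particular the
essential spectral radius satisfies `r̃_ess(e^{L⁰t}) = 1` for every `t > 0`. -/
theorem L0_growth_bounds_vanish
    (ν ω uinf : ℝ) (hν : 0 < ν) (hω : ω ≠ 0)
    (L0 : H →ₗ.[ℂ] H)
    (T0 : ℝ → H →L[ℂ] H) (hT0 : IsC0Semigroup T0) (hgen0 : IsGenerator T0 L0)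
    -- the uniform bound `‖e^{L⁰t}φ‖₂ ≤ c‖φ‖₂`
    (hbdd : ∃ c : ℝ, 0 < c ∧ ∀ t : ℝ, 0 < t → ∀ y : H, ‖T0 t y‖ ≤ c * ‖y‖)
    -- `Sp(L⁰) ⊆ {Re λ ≤ 0}`, with `0` in the closure of the essential spectrum
    (hspec : pSpec L0 ⊆ {z : ℂ | z.re ≤ 0})
    (h0cl : (0 : ℂ) ∈ closure (essSpec L0)) :
    spectralBound L0 = 0 ∧ growthBound T0 = 0 ∧
    ∀ t : ℝ, 0 < t →
      essRadius (T0 t) = 1 ∧ Real.log (essRadius (T0 t)) / t = 0 :=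
  L0_growth_bounds_vanish_general L0 T0 hT0 hgen0 hbdd hspec h0cl

end NSRot
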